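/- arXiv:2402.03415 — 3 statements merged into one kernel-verified Lean document; each statement's English description precedes it below -/
import Mathlib

section
/- Let H be a real Hilbert space with inner product ⟨·,·⟩, and let T₁, T₂ be two bounded invertible linear operators on H such that: (i) T₁ is self-adjoint, and (ii) ⟨T₂f, f⟩ ≥ ⟨T₁f, f⟩ ≥ 0 for all f ∈ H. Then for all f ∈ H, ⟨T₁⁻¹f, f⟩ ≥ ⟨T₂⁻¹f, f⟩. -/
/-!
For a positive operator `T` with `T h = f`, expanding `0 ≤ ⟪T (g - h), g - h⟫` shows that
`g ↦ 2 ⟪g, f⟫ - ⟪T g, g⟫` is maximised at `g = h`, with maximum `⟪h, f⟫ = ⟪T⁻¹ f, f⟫`.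
Evaluating this bound for `T₁` at `g = T₂⁻¹ f`, and using `⟪T₁ g, g⟫ ≤ ⟪T₂ g, g⟫ = ⟪g, f⟫`,
gives `⟪T₂⁻¹ f, f⟫ ≤ ⟪T₁⁻¹ f, f⟫`.
-/

open scoped RealInnerProductSpace

theorem LinearMap.IsPositive.two_inner_sub_inner_apply_le {E : Type*} [NormedAddCommGroup E]
    [InnerProductSpace ℝ E] {T : E →ₗ[ℝ] E} (hT : T.IsPositive) {h f : E} (hTh : T h = f)
    (g : E) : 2 * ⟪g, f⟫ - ⟪T g, g⟫ ≤ ⟪h, f⟫ := by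
  have h_nonneg : 0 ≤ ⟪T (g - h), g - h⟫ := hT.inner_nonneg_left _
  have h_cross : ⟪T g, h⟫ = ⟪g, f⟫ := by rw [hT.isSymmetric, hTh]
  simp only [map_sub, inner_sub_left, inner_sub_right, h_cross, hTh,
    real_inner_comm g f, real_inner_comm h f] at h_nonneg
  linarith

theorem stmt_11_general {H : Type*} [NormedAddCommGroup H] [InnerProductSpace ℝ H]
    (T₁ T₂ : H ≃L[ℝ] H)
    (h_sa : ∀ f g : H, (inner ℝ (T₁ f) g : ℝ) = inner ℝ f (T₁ g))
    (h_pos : ∀ f : H, (0:ℝ) ≤ inner ℝ (T₁ f) f)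
    (h_cmp : ∀ f : H, (inner ℝ (T₁ f) f : ℝ) ≤ inner ℝ (T₂ f) f) :
    ∀ f : H, (inner ℝ (T₂.symm f) f : ℝ) ≤ inner ℝ (T₁.symm f) f := by
  intro f
  have hT₁ : (T₁ : H →ₗ[ℝ] H).IsPositive := (LinearMap.isPositive_iff _).mpr ⟨h_sa, h_pos⟩
  have h_max : 2 * ⟪T₂.symm f, f⟫ - ⟪T₁ (T₂.symm f), T₂.symm f⟫ ≤ ⟪T₁.symm f, f⟫ :=
    hT₁.two_inner_sub_inner_apply_le (T₁.apply_symm_apply f) (T₂.symm f)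
  have h_le := h_cmp (T₂.symm f)
  rw [T₂.apply_symm_apply, real_inner_comm _ f] at h_le
  linarith

/-- comparison of inverses of positive operators on a real Hilbert space
(Lemma 2.24 of Woess). -/
theorem stmt_11 {H : Type*} [NormedAddCommGroup H] [InnerProductSpace ℝ H] [CompleteSpace H]
    (T₁ T₂ : H ≃L[ℝ] H)
    (h_sa : ∀ f g : H, (inner ℝ (T₁ f) g : ℝ) = inner ℝ f (T₁ g))
    (h_pos : ∀ f : H, (0:ℝ) ≤ inner ℝ (T₁ f) f)
    (h_cmp : ∀ f : H, (inner ℝ (T₁ f) f : ℝ) ≤ inner ℝ (T₂ f) f) :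
    ∀ f : H, (inner ℝ (T₂.symm f) f : ℝ) ≤ inner ℝ (T₁.symm f) f :=
  stmt_11_general T₁ T₂ h_sa h_pos h_cmp
end

section
/- Let S be a countable set, ν₀: S → (0,∞) a positive measure, 𝒫 a Markov transition kernel on S for which ν₀ is invariant (Σ_x ν₀(x)𝒫(x,y) = ν₀(y) for all y), and K a Markov transition kernel on S reversible with respect to ν₀ (ν₀(x)K(x,y) = ν₀(y)K(y,x) for all x,y). Suppose ε ∈ (0,1) and 𝒫(x,y) ≥ ε·K(x,y) for all x,y ∈ S. Then for every O ∈ S and every z ∈ (0,1), Σ_{t≥0} z^t·𝒫^t(O,O) ≤ ε⁻¹·Σ_{t≥0} z^t·K^t(O,O); consequently, letting z → 1, the Green functions satisfy G_𝒫(O,O) ≤ ε⁻¹·G_K(O,O) in [0,∞]. -/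
/-!
Put `v = G_P(·, O | z)` and `w = G_K(·, O | z)`. Both are bounded and `ν₀`-summable, and the
resolvent equations `v = δ_O + z P v`, `w = δ_O + z K w` give, for the weighted forms
`E_Q(f, g) = ⟨f, g - z Q g⟩_ν₀`, the identities `E_P(v, v) = ν₀ O * v O` and
`E_K(f, w) = ν₀ O * f O`. For every kernel `B` with row sums `r` and `ν₀ B = r ν₀` one has
`⟨g, B g⟩ ≤ r ⟨g, g⟩`; for `B = K` this makes `E_K` positive semidefinite (reversibility makes it
symmetric), and for `B = P - ε K` it gives `ε E_K(g, g) ≤ E_P(g, g)`. Hence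
`ε E_K(v, v) ≤ E_K(v, w)`, and expanding `0 ≤ E_K(ε v - w, ε v - w)` yields
`ε E_K(v, w) ≤ E_K(w, w)`, i.e. `ε v O ≤ w O`. The bound for the Green functions follows by
letting `z → 1` in each partial sum.
-/

open scoped Classical ENNReal

noncomputable section

/-- `t`-step kernel of a (sub)Markov kernel on a countable space. -/
def kstep {S : Type*} (Q : S → S → ℝ) : ℕ → S → S → ℝ
  | 0 => fun x y => if x = y then 1 else 0
  | (t + 1) => fun x y => ∑' z, kstep Q t x z * Q z y

/-- Green function of the kernel `Q` at `O`, with values in `[0,∞]`. -/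
def green {S : Type*} (Q : S → S → ℝ) (O : S) : ℝ≥0∞ :=
  ∑' t : ℕ, ENNReal.ofReal (kstep Q t O O)

open Set Function Filter Topology

section DoubleSeries

variable {α β : Type*}

theorem HasSum.uncurry_of_nonneg {F : α → β → ℝ} (hF : ∀ a b, 0 ≤ F a b) {g : α → ℝ}
    {s : ℝ} (hfib : ∀ a, HasSum (F a) (g a)) (hg : HasSum g s) : HasSum (uncurry F) s := by
  have hsum : Summable (uncurry F) := by
    refine (summable_prod_of_nonneg fun p => hF p.1 p.2).2 ⟨fun a => (hfib a).summable, ?_⟩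
    simpa only [uncurry_apply_pair, (hfib _).tsum_eq] using hg.summable
  exact (hsum.hasSum.prod_fiberwise hfib).unique hg ▸ hsum.hasSum

theorem HasSum.tsum_swap_of_nonneg {F : α → β → ℝ} (hF : ∀ a b, 0 ≤ F a b) {g : α → ℝ}
    {s : ℝ} (hfib : ∀ a, HasSum (F a) (g a)) (hg : HasSum g s) :
    HasSum (fun b => ∑' a, F a b) s := by
  have h : HasSum (fun q : β × α => F q.2 q.1) s :=
    (Equiv.prodComm β α).hasSum_iff.2 (HasSum.uncurry_of_nonneg hF hfib hg)
  exact h.prod_fiberwise fun b => (h.summable.prod_factor b).hasSum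

theorem Summable.mul_of_abs_le {f g : α → ℝ} (hf : Summable f) {C : ℝ}
    (hg : ∀ a, |g a| ≤ C) : Summable fun a => f a * g a :=
  (hf.abs.mul_right C).of_norm_bounded fun a => by
    rw [Real.norm_eq_abs, abs_mul]
    exact mul_le_mul_of_nonneg_left (hg a) (abs_nonneg _)

end DoubleSeries

theorem ENNReal.tsum_ofReal_le_of_forall_pow_mul_le {a : ℕ → ℝ} {c : ℝ≥0∞}
    (h : ∀ z ∈ Ioo (0 : ℝ) 1, ∑' t, ENNReal.ofReal (z ^ t * a t) ≤ c) :
    ∑' t, ENNReal.ofReal (a t) ≤ c := by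
  refine ENNReal.tsum_le_of_sum_range_le fun n => ?_
  have hcont : Continuous fun z : ℝ => ∑ t ∈ Finset.range n, ENNReal.ofReal (z ^ t * a t) :=
    continuous_finsetSum _ fun t _ =>
      ENNReal.continuous_ofReal.comp ((continuous_pow t).mul continuous_const)
  have hlim : Tendsto (fun z : ℝ => ∑ t ∈ Finset.range n, ENNReal.ofReal (z ^ t * a t))
      (𝓝[<] 1) (𝓝 (∑ t ∈ Finset.range n, ENNReal.ofReal (a t))) := by
    simpa using (hcont.tendsto 1).mono_left nhdsWithin_le_nhds
  refine le_of_tendsto hlim ?_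
  filter_upwards [Ioo_mem_nhdsLT zero_lt_one] with z hz
  exact (ENNReal.sum_le_tsum _).trans (h z hz)

theorem LinearMap.BilinForm.IsSymm.mul_apply_le_of_mul_apply_self_le {M : Type*}
    [AddCommGroup M] [Module ℝ M] {E : LinearMap.BilinForm ℝ M} (hE : E.IsSymm)
    (hpos : ∀ u, 0 ≤ E u u) {ε : ℝ} (hε : 0 ≤ ε) {v w : M} (hv : ε * E v v ≤ E v w) :
    ε * E v w ≤ E w w := by
  have h := hpos (ε • v - w)
  simp only [map_sub, map_smul, LinearMap.sub_apply, LinearMap.smul_apply, smul_eq_mul,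
    hE.eq w v] at h
  nlinarith [mul_le_mul_of_nonneg_left hv hε]

section MarkovKernels

variable {S : Type*}

structure IsMassKernel (B : S → S → ℝ) (r : ℝ) : Prop where
  nonneg : ∀ x y, 0 ≤ B x y
  hasSum_row : ∀ x, HasSum (B x) r

structure IsInvariantKernel (ν : S → ℝ) (B : S → S → ℝ) (r : ℝ) : Prop
    extends IsMassKernel B r where
  hasSum_col : ∀ y, HasSum (fun x => ν x * B x y) (r * ν y)

def applyKernel (B : S → S → ℝ) (g : S → ℝ) (x : S) : ℝ := ∑' y, B x y * g y

section Kernel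

variable {ν : S → ℝ} {B : S → S → ℝ} {r : ℝ} {g : S → ℝ} {C : ℝ}

theorem IsMassKernel.le (hB : IsMassKernel B r) (x y : S) : B x y ≤ r :=
  le_hasSum (hB.hasSum_row x) y fun y' _ => hB.nonneg x y'

theorem IsMassKernel.summable_mul (hB : IsMassKernel B r) (hg : ∀ y, |g y| ≤ C) (x : S) :
    Summable fun y => B x y * g y :=
  (hB.hasSum_row x).summable.mul_of_abs_le hg

theorem IsMassKernel.abs_applyKernel_le (hB : IsMassKernel B r) (hg : ∀ y, |g y| ≤ C) (x : S) :
    |applyKernel B g x| ≤ applyKernel B (fun y => |g y|) x := by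
  have habs : (fun y => |B x y * g y|) = fun y => B x y * |g y| :=
    funext fun y => by rw [abs_mul, abs_of_nonneg (hB.nonneg x y)]
  have h := norm_tsum_le_tsum_norm (f := fun y => B x y * g y)
  simp only [Real.norm_eq_abs, habs] at h
  exact h (hB.summable_mul (g := fun y => |g y|) (by simpa using hg) x)

theorem IsMassKernel.applyKernel_abs_le (hB : IsMassKernel B r) (hg : ∀ y, |g y| ≤ C) (x : S) :
    applyKernel B (fun y => |g y|) x ≤ r * C :=
  hasSum_le (fun y => mul_le_mul_of_nonneg_left (hg y) (hB.nonneg x y))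
    (hB.summable_mul (g := fun y => |g y|) (by simpa using hg) x).hasSum
    ((hB.hasSum_row x).mul_right C)

theorem IsInvariantKernel.of_reversible (hB : IsMassKernel B 1)
    (hrev : ∀ x y, ν x * B x y = ν y * B y x) : IsInvariantKernel ν B 1 where
  toIsMassKernel := hB
  hasSum_col y := by
    simpa only [hrev _ y, mul_one, one_mul] using (hB.hasSum_row y).mul_left (ν y)

theorem IsInvariantKernel.hasSum_mul_applyKernel (hB : IsInvariantKernel ν B r)
    (hν : ∀ x, 0 ≤ ν x) {h : S → ℝ} (hh : ∀ x, 0 ≤ h x) {s : ℝ}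
    (hs : HasSum (fun x => ν x * h x) s) :
    HasSum (fun x => ν x * applyKernel B h x) (r * s) := by
  have hswap := HasSum.tsum_swap_of_nonneg
    (F := fun y x => ν x * B x y * h y)
    (fun y x => mul_nonneg (mul_nonneg (hν x) (hB.nonneg x y)) (hh y))
    (fun y => (hB.hasSum_col y).mul_right (h y))
    (by simpa only [mul_assoc] using hs.mul_left r)
  convert hswap using 2 with x
  rw [applyKernel, ← tsum_mul_left]
  exact tsum_congr fun y => by ring

end Kernel

section Steps

variable {ν : S → ℝ} {Q : S → S → ℝ}

theorem kstep_zero_apply (Q : S → S → ℝ) (x y : S) :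
    kstep Q 0 x y = if x = y then 1 else 0 := rfl

theorem IsMassKernel.iterate (hQ : IsMassKernel Q 1) (t : ℕ) : IsMassKernel (kstep Q t) 1 := by
  induction t with
  | zero =>
    refine ⟨fun x y => by rw [kstep_zero_apply]; split_ifs <;> norm_num, fun x => ?_⟩
    convert hasSum_ite_eq x (1 : ℝ) using 2 with y
    simp only [kstep_zero_apply, eq_comm]
  | succ t ih =>
    refine ⟨fun x y => tsum_nonneg fun c => mul_nonneg (ih.nonneg x c) (hQ.nonneg c y),
      fun x => ?_⟩
    exact HasSum.tsum_swap_of_nonneg (fun c y => mul_nonneg (ih.nonneg x c) (hQ.nonneg c y))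
      (fun c => by simpa only [mul_one] using (hQ.hasSum_row c).mul_left (kstep Q t x c))
      (ih.hasSum_row x)

theorem IsMassKernel.kstep_succ_apply (hQ : IsMassKernel Q 1) (t : ℕ) (x y : S) :
    kstep Q (t + 1) x y = applyKernel Q (fun c => kstep Q t c y) x := by
  induction t generalizing x y with
  | zero =>
    simp [kstep, applyKernel]
  | succ t ih =>
    have hQbd : ∀ c, |Q c y| ≤ 1 := fun c =>
      abs_le.2 ⟨by linarith [hQ.nonneg c y], hQ.le c y⟩
    have hswap := HasSum.tsum_swap_of_nonneg
      (F := fun d c => Q x d * (kstep Q t d c * Q c y))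
      (fun d c => mul_nonneg (hQ.nonneg x d)
        (mul_nonneg ((hQ.iterate t).nonneg d c) (hQ.nonneg c y)))
      (fun d => ((hQ.iterate t).summable_mul hQbd d).hasSum.mul_left (Q x d))
      (hQ.summable_mul (g := fun d => kstep Q (t + 1) d y)
        (fun d => abs_le.2 ⟨by linarith [(hQ.iterate (t + 1)).nonneg d y],
          (hQ.iterate (t + 1)).le d y⟩) x).hasSum
    refine (hswap.tsum_eq.symm.trans (tsum_congr fun c => ?_)).symm
    rw [ih, applyKernel, ← tsum_mul_right]
    exact tsum_congr fun d => by ring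

theorem IsInvariantKernel.hasSum_mul_kstep (hQ : IsInvariantKernel ν Q 1) (hν : ∀ x, 0 ≤ ν x)
    (t : ℕ) (y : S) : HasSum (fun x => ν x * kstep Q t x y) (ν y) := by
  induction t with
  | zero =>
    convert hasSum_ite_eq y (ν y) using 2 with x
    by_cases h : x = y <;> simp [kstep_zero_apply, h]
  | succ t ih =>
    simpa only [hQ.toIsMassKernel.kstep_succ_apply, one_mul] using
      hQ.hasSum_mul_applyKernel hν (fun x => (hQ.iterate t).nonneg x y) ih

end Steps

section GreenGF

variable {ν : S → ℝ} {Q : S → S → ℝ} {z : ℝ}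

/-- `G_Q(x, y | z)`. -/
def greenGF (Q : S → S → ℝ) (z : ℝ) (x y : S) : ℝ := ∑' t : ℕ, z ^ t * kstep Q t x y

theorem IsMassKernel.summable_greenGF (hQ : IsMassKernel Q 1) (hz₀ : 0 ≤ z) (hz₁ : z < 1)
    (x y : S) : Summable fun t : ℕ => z ^ t * kstep Q t x y :=
  Summable.of_nonneg_of_le (fun t => mul_nonneg (pow_nonneg hz₀ t) ((hQ.iterate t).nonneg x y))
    (fun t => mul_le_of_le_one_right (pow_nonneg hz₀ t) ((hQ.iterate t).le x y))
    (summable_geometric_of_lt_one hz₀ hz₁)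

theorem IsMassKernel.greenGF_nonneg (hQ : IsMassKernel Q 1) (hz₀ : 0 ≤ z) (x y : S) :
    0 ≤ greenGF Q z x y :=
  tsum_nonneg fun t => mul_nonneg (pow_nonneg hz₀ t) ((hQ.iterate t).nonneg x y)

theorem IsMassKernel.abs_greenGF_le (hQ : IsMassKernel Q 1) (hz₀ : 0 ≤ z) (hz₁ : z < 1)
    (x y : S) : |greenGF Q z x y| ≤ (1 - z)⁻¹ := by
  rw [abs_of_nonneg (hQ.greenGF_nonneg hz₀ x y), ← tsum_geometric_of_lt_one hz₀ hz₁]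
  exact (hQ.summable_greenGF hz₀ hz₁ x y).tsum_le_tsum
    (fun t => mul_le_of_le_one_right (pow_nonneg hz₀ t) ((hQ.iterate t).le x y))
    (summable_geometric_of_lt_one hz₀ hz₁)

theorem IsMassKernel.greenGF_eq (hQ : IsMassKernel Q 1) (hz₀ : 0 ≤ z) (hz₁ : z < 1) (x O : S) :
    greenGF Q z x O
      = (if x = O then 1 else 0) + z * applyKernel Q (fun y => greenGF Q z y O) x := by
  have hswap := HasSum.tsum_swap_of_nonneg
    (F := fun c (t : ℕ) => Q x c * (z ^ t * kstep Q t c O))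
    (fun c t => mul_nonneg (hQ.nonneg x c)
      (mul_nonneg (pow_nonneg hz₀ t) ((hQ.iterate t).nonneg c O)))
    (fun c => (hQ.summable_greenGF hz₀ hz₁ c O).hasSum.mul_left (Q x c))
    (hQ.summable_mul (fun c => hQ.abs_greenGF_le hz₀ hz₁ c O) x).hasSum
  have hstep : ∀ t : ℕ,
      ∑' c, Q x c * (z ^ t * kstep Q t c O) = z ^ t * kstep Q (t + 1) x O := by
    intro t
    rw [hQ.kstep_succ_apply, applyKernel, ← tsum_mul_left]
    exact tsum_congr fun c => by ring
  simp only [hstep] at hswap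
  rw [greenGF, (hQ.summable_greenGF hz₀ hz₁ x O).tsum_eq_zero_add, applyKernel,
    ← hswap.tsum_eq, ← tsum_mul_left, pow_zero, one_mul, kstep_zero_apply]
  exact congrArg _ (tsum_congr fun t => by ring)

theorem IsInvariantKernel.hasSum_mul_greenGF (hQ : IsInvariantKernel ν Q 1)
    (hν : ∀ x, 0 ≤ ν x) (hz₀ : 0 ≤ z) (hz₁ : z < 1) (O : S) :
    HasSum (fun x => ν x * greenGF Q z x O) ((1 - z)⁻¹ * ν O) := by
  have hswap := HasSum.tsum_swap_of_nonneg
    (F := fun (t : ℕ) x => z ^ t * (ν x * kstep Q t x O))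
    (fun t x => mul_nonneg (pow_nonneg hz₀ t)
      (mul_nonneg (hν x) ((hQ.iterate t).nonneg x O)))
    (fun t => (hQ.hasSum_mul_kstep hν t O).mul_left (z ^ t))
    ((hasSum_geometric_of_lt_one hz₀ hz₁).mul_right (ν O))
  convert hswap using 2 with x
  rw [greenGF, ← tsum_mul_left]
  exact tsum_congr fun t => by ring

theorem IsMassKernel.ofReal_greenGF_le_green (hQ : IsMassKernel Q 1) (hz₀ : 0 ≤ z)
    (hz₁ : z < 1) (O : S) : ENNReal.ofReal (greenGF Q z O O) ≤ green Q O := by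
  rw [greenGF, ENNReal.ofReal_tsum_of_nonneg
    (fun t => mul_nonneg (pow_nonneg hz₀ t) ((hQ.iterate t).nonneg O O))
    (hQ.summable_greenGF hz₀ hz₁ O O)]
  exact ENNReal.tsum_le_tsum fun t => ENNReal.ofReal_le_ofReal
    (mul_le_of_le_one_left ((hQ.iterate t).nonneg O O) (pow_le_one₀ hz₀ hz₁.le))

end GreenGF

section Forms

variable {ν : S → ℝ} {B : S → S → ℝ} {r z : ℝ}

def boundedIntegrable (ν : S → ℝ) : Submodule ℝ (S → ℝ) where
  carrier := {f | (∃ C, ∀ x, |f x| ≤ C) ∧ Summable fun x => ν x * f x}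
  add_mem' := by
    rintro f g ⟨⟨C, hC⟩, hf⟩ ⟨⟨D, hD⟩, hg⟩
    refine ⟨⟨C + D, fun x => (abs_add_le _ _).trans (add_le_add (hC x) (hD x))⟩, ?_⟩
    simpa only [Pi.add_apply, mul_add] using hf.add hg
  zero_mem' := ⟨⟨0, fun x => by simp⟩, by simp⟩
  smul_mem' := by
    rintro c f ⟨⟨C, hC⟩, hf⟩
    refine ⟨⟨|c| * C, fun x => ?_⟩, ?_⟩
    · rw [Pi.smul_apply, smul_eq_mul, abs_mul]
      exact mul_le_mul_of_nonneg_left (hC x) (abs_nonneg c)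
    · simpa only [Pi.smul_apply, smul_eq_mul, mul_left_comm] using hf.mul_left c

theorem summable_mul_mul_of_mem_boundedIntegrable {f g : S → ℝ}
    (hf : f ∈ boundedIntegrable ν) {C : ℝ} (hg : ∀ x, |g x| ≤ C) :
    Summable fun x => ν x * (f x * g x) := by
  simpa only [mul_assoc] using hf.2.mul_of_abs_le hg

def innerForm (ν : S → ℝ) : LinearMap.BilinForm ℝ (boundedIntegrable ν) :=
  LinearMap.mk₂ ℝ (fun f g => ∑' x, ν x * ((f : S → ℝ) x * (g : S → ℝ) x))
    (fun f₁ f₂ g => by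
      obtain ⟨C, hC⟩ := g.2.1
      simp only [Submodule.coe_add, Pi.add_apply, add_mul, mul_add]
      exact (summable_mul_mul_of_mem_boundedIntegrable f₁.2 hC).tsum_add
        (summable_mul_mul_of_mem_boundedIntegrable f₂.2 hC))
    (fun c f g => by
      simp only [Submodule.coe_smul, Pi.smul_apply, smul_eq_mul, ← tsum_mul_left]
      exact tsum_congr fun x => by ring)
    (fun f g₁ g₂ => by
      obtain ⟨C₁, hC₁⟩ := g₁.2.1
      obtain ⟨C₂, hC₂⟩ := g₂.2.1
      simp only [Submodule.coe_add, Pi.add_apply, mul_add]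
      exact (summable_mul_mul_of_mem_boundedIntegrable f.2 hC₁).tsum_add
        (summable_mul_mul_of_mem_boundedIntegrable f.2 hC₂))
    (fun c f g => by
      simp only [Submodule.coe_smul, Pi.smul_apply, smul_eq_mul, ← tsum_mul_left]
      exact tsum_congr fun x => by ring)

theorem innerForm_apply (f g : boundedIntegrable ν) :
    innerForm ν f g = ∑' x, ν x * ((f : S → ℝ) x * (g : S → ℝ) x) := rfl

theorem innerForm_isSymm : (innerForm ν).IsSymm :=
  ⟨fun f g => tsum_congr fun x => by rw [mul_comm ((f : S → ℝ) x)]⟩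

theorem innerForm_self_nonneg (hν : ∀ x, 0 ≤ ν x) (f : boundedIntegrable ν) :
    0 ≤ innerForm ν f f :=
  tsum_nonneg fun x => mul_nonneg (hν x) (mul_self_nonneg _)

theorem IsMassKernel.hasSum_prod_mul_applyKernel (hB : IsMassKernel B r) {f g : S → ℝ}
    (hf : Summable fun x => ν x * f x) {C : ℝ} (hg : ∀ y, |g y| ≤ C) :
    HasSum (fun p : S × S => ν p.1 * f p.1 * (B p.1 p.2 * g p.2))
      (∑' x, ν x * (f x * applyKernel B g x)) := by
  have hdom : Summable (uncurry fun x y => |ν x * f x| * (B x y * C)) :=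
    (HasSum.uncurry_of_nonneg
      (fun x y => mul_nonneg (abs_nonneg _)
        (mul_nonneg (hB.nonneg x y) ((abs_nonneg (g y)).trans (hg y))))
      (fun x => ((hB.hasSum_row x).mul_right C).mul_left |ν x * f x|)
      (hf.abs.hasSum.mul_right (r * C))).summable
  have hsum : Summable fun p : S × S => ν p.1 * f p.1 * (B p.1 p.2 * g p.2) :=
    hdom.of_norm_bounded fun p => by
      rw [Real.norm_eq_abs, abs_mul, abs_mul (B _ _), abs_of_nonneg (hB.nonneg _ _)]
      exact mul_le_mul_of_nonneg_left (mul_le_mul_of_nonneg_left (hg _) (hB.nonneg _ _))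
        (abs_nonneg _)
  convert hsum.hasSum using 1
  rw [hsum.tsum_prod' hsum.prod_factor]
  refine tsum_congr fun x => ?_
  rw [applyKernel, ← tsum_mul_left, ← tsum_mul_left]
  exact tsum_congr fun y => by ring

theorem IsInvariantKernel.applyKernel_mem (hB : IsInvariantKernel ν B r) (hν : ∀ x, 0 ≤ ν x)
    {g : S → ℝ} (hg : g ∈ boundedIntegrable ν) : applyKernel B g ∈ boundedIntegrable ν := by
  obtain ⟨⟨C, hC⟩, hgν⟩ := hg
  refine ⟨⟨r * C, fun x => (hB.abs_applyKernel_le hC x).trans (hB.applyKernel_abs_le hC x)⟩,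
    ?_⟩
  have habs : HasSum (fun x => ν x * |g x|) (∑' x, |ν x * g x|) := by
    simpa only [abs_mul, abs_of_nonneg (hν _)] using hgν.abs.hasSum
  refine (hB.hasSum_mul_applyKernel hν (fun x => abs_nonneg (g x)) habs).summable
    |>.of_norm_bounded fun x => ?_
  rw [Real.norm_eq_abs, abs_mul, abs_of_nonneg (hν x)]
  exact mul_le_mul_of_nonneg_left (hB.abs_applyKernel_le hC x) (hν x)

def IsInvariantKernel.operator (hB : IsInvariantKernel ν B r) (hν : ∀ x, 0 ≤ ν x) :
    boundedIntegrable ν →ₗ[ℝ] boundedIntegrable ν where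
  toFun g := ⟨applyKernel B g, hB.applyKernel_mem hν g.2⟩
  map_add' f g := by
    obtain ⟨C, hC⟩ := f.2.1
    obtain ⟨D, hD⟩ := g.2.1
    ext x
    simp only [Submodule.coe_add, Pi.add_apply, applyKernel, mul_add]
    exact (hB.summable_mul hC x).tsum_add (hB.summable_mul hD x)
  map_smul' c g := by
    ext x
    simp only [Submodule.coe_smul, Pi.smul_apply, smul_eq_mul, applyKernel, RingHom.id_apply,
      ← tsum_mul_left]
    exact tsum_congr fun y => by ring

theorem IsInvariantKernel.coe_operator (hB : IsInvariantKernel ν B r) (hν : ∀ x, 0 ≤ ν x)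
    (g : boundedIntegrable ν) : (hB.operator hν g : S → ℝ) = applyKernel B g := rfl

theorem IsInvariantKernel.innerForm_operator_comm (hB : IsInvariantKernel ν B r)
    (hν : ∀ x, 0 ≤ ν x) (hrev : ∀ x y, ν x * B x y = ν y * B y x) (f g : boundedIntegrable ν) :
    innerForm ν f (hB.operator hν g) = innerForm ν g (hB.operator hν f) := by
  obtain ⟨C, hC⟩ := g.2.1
  obtain ⟨D, hD⟩ := f.2.1
  have h₁ : HasSum _ (innerForm ν f (hB.operator hν g)) :=
    hB.hasSum_prod_mul_applyKernel f.2.2 hC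
  have h₂ : HasSum _ (innerForm ν g (hB.operator hν f)) :=
    hB.hasSum_prod_mul_applyKernel g.2.2 hD
  refine h₁.unique ((Equiv.prodComm S S).hasSum_iff.1 ?_)
  convert h₂ using 1
  funext p
  simp only [comp_apply, Equiv.prodComm_apply, Prod.fst_swap, Prod.snd_swap]
  linear_combination ((f : S → ℝ) p.2 * (g : S → ℝ) p.1) * hrev p.2 p.1

theorem IsInvariantKernel.innerForm_operator_self_le (hB : IsInvariantKernel ν B r)
    (hν : ∀ x, 0 ≤ ν x) (g : boundedIntegrable ν) :
    innerForm ν g (hB.operator hν g) ≤ r * innerForm ν g g := by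
  obtain ⟨C, hC⟩ := g.2.1
  set u : S → ℝ := (g : S → ℝ)
  have hg2 : HasSum (fun x => ν x * (u x * u x)) (innerForm ν g g) :=
    (summable_mul_mul_of_mem_boundedIntegrable g.2 hC).hasSum
  have hleft : HasSum (fun p : S × S => ν p.1 * (u p.1 * u p.1) * B p.1 p.2)
      (innerForm ν g g * r) :=
    HasSum.uncurry_of_nonneg (F := fun x y => ν x * (u x * u x) * B x y)
      (fun x y => mul_nonneg (mul_nonneg (hν x) (mul_self_nonneg _)) (hB.nonneg x y))
      (fun x => (hB.hasSum_row x).mul_left _) (hg2.mul_right r)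
  have hright : HasSum (fun p : S × S => ν p.1 * B p.1 p.2 * (u p.2 * u p.2))
      (r * innerForm ν g g) :=
    (Equiv.prodComm S S).hasSum_iff.1 <| HasSum.uncurry_of_nonneg
      (F := fun y x => ν x * B x y * (u y * u y))
      (fun y x => mul_nonneg (mul_nonneg (hν x) (hB.nonneg x y)) (mul_self_nonneg _))
      (fun y => (hB.hasSum_col y).mul_right _)
      (by simpa only [mul_assoc] using hg2.mul_left r)
  have hmix : HasSum _ (innerForm ν g (hB.operator hν g)) :=
    hB.hasSum_prod_mul_applyKernel g.2.2 hC
  -- `2 g x g y ≤ g x ^ 2 + g y ^ 2`, and both marginals of `ν x B x y` are `r ν`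
  have hle := hasSum_le (fun p => ?_) hmix ((hleft.add hright).div_const 2)
  · linarith
  · have hνB := mul_nonneg (hν p.1) (hB.nonneg p.1 p.2)
    nlinarith [mul_nonneg hνB (sq_nonneg (u p.1 - u p.2))]

def IsInvariantKernel.resolventForm (hB : IsInvariantKernel ν B r) (hν : ∀ x, 0 ≤ ν x)
    (z : ℝ) : LinearMap.BilinForm ℝ (boundedIntegrable ν) :=
  innerForm ν - z • (innerForm ν).compl₂ (hB.operator hν)

theorem IsInvariantKernel.resolventForm_apply (hB : IsInvariantKernel ν B r)
    (hν : ∀ x, 0 ≤ ν x) (f g : boundedIntegrable ν) :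
    hB.resolventForm hν z f g = innerForm ν f g - z * innerForm ν f (hB.operator hν g) := rfl

theorem IsInvariantKernel.resolventForm_self_nonneg (hB : IsInvariantKernel ν B r)
    (hν : ∀ x, 0 ≤ ν x) (hz₀ : 0 ≤ z) (hzr : z * r ≤ 1) (g : boundedIntegrable ν) :
    0 ≤ hB.resolventForm hν z g g := by
  rw [hB.resolventForm_apply]
  have hpos := innerForm_self_nonneg hν g
  nlinarith [mul_le_mul_of_nonneg_left (hB.innerForm_operator_self_le hν g) hz₀,
    mul_nonneg (sub_nonneg.2 hzr) hpos]

theorem IsInvariantKernel.resolventForm_isSymm (hB : IsInvariantKernel ν B r)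
    (hν : ∀ x, 0 ≤ ν x) (hrev : ∀ x y, ν x * B x y = ν y * B y x) :
    (hB.resolventForm hν z).IsSymm :=
  ⟨fun f g => by
    rw [hB.resolventForm_apply, hB.resolventForm_apply, innerForm_isSymm.eq f g,
      hB.innerForm_operator_comm hν hrev f g]⟩

theorem IsInvariantKernel.mul_resolventForm_le {P K : S → S → ℝ}
    (hP : IsInvariantKernel ν P 1) (hK : IsInvariantKernel ν K 1) (hν : ∀ x, 0 ≤ ν x) {ε : ℝ}
    (hε : ε ≤ 1)
    (hdom : ∀ x y, ε * K x y ≤ P x y) (hz₀ : 0 ≤ z) (hz₁ : z ≤ 1) (g : boundedIntegrable ν) :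
    ε * hK.resolventForm hν z g g ≤ hP.resolventForm hν z g g := by
  have hA : IsInvariantKernel ν (fun x y => P x y - ε * K x y) (1 - ε) :=
    { nonneg := fun x y => sub_nonneg.2 (hdom x y)
      hasSum_row := fun x => by
        simpa only [mul_one] using (hP.hasSum_row x).sub ((hK.hasSum_row x).mul_left ε)
      hasSum_col := fun y => by
        have h := (hP.hasSum_col y).sub ((hK.hasSum_col y).mul_left ε)
        rwa [show (fun x => ν x * P x y - ε * (ν x * K x y))
            = fun x => ν x * (P x y - ε * K x y) from funext fun x => by ring,
          show 1 * ν y - ε * (1 * ν y) = (1 - ε) * ν y by ring] at h }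
  have hsplit : hP.operator hν g = hA.operator hν g + ε • hK.operator hν g := by
    obtain ⟨C, hC⟩ := g.2.1
    ext x
    simp only [coe_operator, Submodule.coe_add, Submodule.coe_smul, Pi.add_apply,
      Pi.smul_apply, smul_eq_mul, applyKernel]
    rw [← tsum_mul_left,
      ← (hA.summable_mul hC x).tsum_add ((hK.summable_mul hC x).mul_left ε)]
    exact tsum_congr fun y => by ring
  rw [hK.resolventForm_apply, hP.resolventForm_apply, hsplit, map_add, map_smul, smul_eq_mul]
  nlinarith [mul_le_mul_of_nonneg_left (hA.innerForm_operator_self_le hν g) hz₀,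
    mul_nonneg (mul_nonneg (sub_nonneg.2 hε) (sub_nonneg.2 hz₁))
      (innerForm_self_nonneg hν g)]

theorem IsInvariantKernel.greenGF_mem {Q : S → S → ℝ} (hQ : IsInvariantKernel ν Q 1)
    (hν : ∀ x, 0 ≤ ν x) (hz₀ : 0 ≤ z) (hz₁ : z < 1) (O : S) :
    (fun x => greenGF Q z x O) ∈ boundedIntegrable ν :=
  ⟨⟨_, fun x => hQ.abs_greenGF_le hz₀ hz₁ x O⟩, (hQ.hasSum_mul_greenGF hν hz₀ hz₁ O).summable⟩

theorem IsInvariantKernel.resolventForm_greenGF {Q : S → S → ℝ}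
    (hQ : IsInvariantKernel ν Q 1) (hν : ∀ x, 0 ≤ ν x) (hz₀ : 0 ≤ z) (hz₁ : z < 1) (O : S)
    (f : boundedIntegrable ν) :
    hQ.resolventForm hν z f ⟨_, hQ.greenGF_mem hν hz₀ hz₁ O⟩ = ν O * (f : S → ℝ) O := by
  set u : boundedIntegrable ν := ⟨_, hQ.greenGF_mem hν hz₀ hz₁ O⟩
  have hu : ∀ x,
      ((u - z • hQ.operator hν u : boundedIntegrable ν) : S → ℝ) x = if x = O then 1 else 0 := by
    intro x
    simp only [Submodule.coe_sub, Submodule.coe_smul, Pi.sub_apply, Pi.smul_apply,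
      smul_eq_mul, coe_operator]
    rw [show (u : S → ℝ) x = greenGF Q z x O from rfl, hQ.greenGF_eq hz₀ hz₁ x O]
    ring
  rw [hQ.resolventForm_apply, ← smul_eq_mul, ← map_smul, ← map_sub, innerForm_apply]
  simp only [hu, mul_ite, mul_one, mul_zero]
  exact tsum_ite_eq O _

end Forms

theorem mul_greenGF_le_greenGF {ν : S → ℝ} (hν : ∀ x, 0 < ν x) {P K : S → S → ℝ}
    (hP : IsInvariantKernel ν P 1) (hK : IsInvariantKernel ν K 1)
    (hKrev : ∀ x y, ν x * K x y = ν y * K y x) {ε : ℝ} (hε₀ : 0 ≤ ε) (hε₁ : ε ≤ 1)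
    (hdom : ∀ x y, ε * K x y ≤ P x y) {z : ℝ} (hz₀ : 0 ≤ z) (hz₁ : z < 1) (O : S) :
    ε * greenGF P z O O ≤ greenGF K z O O := by
  have hν₀ : ∀ x, 0 ≤ ν x := fun x => (hν x).le
  set E := hK.resolventForm hν₀ z
  set v : boundedIntegrable ν := ⟨_, hP.greenGF_mem hν₀ hz₀ hz₁ O⟩
  set w : boundedIntegrable ν := ⟨_, hK.greenGF_mem hν₀ hz₀ hz₁ O⟩
  have hvw : E v w = ν O * greenGF P z O O := hK.resolventForm_greenGF hν₀ hz₀ hz₁ O v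
  have hww : E w w = ν O * greenGF K z O O := hK.resolventForm_greenGF hν₀ hz₀ hz₁ O w
  have hvv : ε * E v v ≤ E v w := by
    rw [hvw, ← hP.resolventForm_greenGF hν₀ hz₀ hz₁ O v]
    exact hP.mul_resolventForm_le hK hν₀ hε₁ hdom hz₀ hz₁.le v
  have key := (hK.resolventForm_isSymm hν₀ hKrev).mul_apply_le_of_mul_apply_self_le
    (hK.resolventForm_self_nonneg hν₀ hz₀ (by linarith)) hε₀ hvv
  rw [hvw, hww, mul_left_comm] at key
  exact le_of_mul_le_mul_left key (hν O)

end MarkovKernels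

theorem stmt_12_general {S : Type*}
    (ν₀ : S → ℝ) (hν₀ : ∀ x, 0 < ν₀ x)
    (P K : S → S → ℝ)
    (hPnn : ∀ x y, 0 ≤ P x y) (hProw : ∀ x, HasSum (P x) 1)
    (hKnn : ∀ x y, 0 ≤ K x y) (hKrow : ∀ x, HasSum (K x) 1)
    (hPinv : ∀ y, HasSum (fun x => ν₀ x * P x y) (ν₀ y))
    (hKrev : ∀ x y, ν₀ x * K x y = ν₀ y * K y x)
    (ε : ℝ) (hε : ε ∈ Set.Ioo (0:ℝ) 1)
    (hdom : ∀ x y, ε * K x y ≤ P x y) (O : S) :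
    (∀ z ∈ Set.Ioo (0:ℝ) 1,
      ∑' t : ℕ, z ^ t * kstep P t O O ≤ ε⁻¹ * ∑' t : ℕ, z ^ t * kstep K t O O) ∧
    green P O ≤ ENNReal.ofReal ε⁻¹ * green K O := by
  have hP : IsInvariantKernel ν₀ P 1 := ⟨⟨hPnn, hProw⟩, by simpa only [one_mul] using hPinv⟩
  have hK := IsInvariantKernel.of_reversible ⟨hKnn, hKrow⟩ hKrev
  have hgf : ∀ z ∈ Ioo (0 : ℝ) 1, greenGF P z O O ≤ ε⁻¹ * greenGF K z O O := fun z hz =>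
    (le_inv_mul_iff₀ hε.1).2
      (mul_greenGF_le_greenGF hν₀ hP hK hKrev hε.1.le hε.2.le hdom hz.1.le hz.2 O)
  refine ⟨hgf, ENNReal.tsum_ofReal_le_of_forall_pow_mul_le fun z hz => ?_⟩
  calc ∑' t, ENNReal.ofReal (z ^ t * kstep P t O O) = ENNReal.ofReal (greenGF P z O O) :=
        (ENNReal.ofReal_tsum_of_nonneg
          (fun t => mul_nonneg (pow_nonneg hz.1.le t) ((hP.iterate t).nonneg O O))
          (hP.summable_greenGF hz.1.le hz.2 O O)).symm
    _ ≤ ENNReal.ofReal (ε⁻¹ * greenGF K z O O) := ENNReal.ofReal_le_ofReal (hgf z hz)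
    _ = ENNReal.ofReal ε⁻¹ * ENNReal.ofReal (greenGF K z O O) :=
        ENNReal.ofReal_mul (inv_nonneg.2 hε.1.le)
    _ ≤ ENNReal.ofReal ε⁻¹ * green K O := by
        gcongr
        exact hK.ofReal_greenGF_le_green hz.1.le hz.2 O

/-- comparison of Green functions of a Markov chain with an
ε-dominated reversible chain sharing the invariant measure ν₀. -/
theorem stmt_12 {S : Type*} [Countable S]
    (ν₀ : S → ℝ) (hν₀ : ∀ x, 0 < ν₀ x)
    (P K : S → S → ℝ)
    (hPnn : ∀ x y, 0 ≤ P x y) (hProw : ∀ x, HasSum (P x) 1)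
    (hKnn : ∀ x y, 0 ≤ K x y) (hKrow : ∀ x, HasSum (K x) 1)
    (hPinv : ∀ y, HasSum (fun x => ν₀ x * P x y) (ν₀ y))
    (hKrev : ∀ x y, ν₀ x * K x y = ν₀ y * K y x)
    (ε : ℝ) (hε : ε ∈ Set.Ioo (0:ℝ) 1)
    (hdom : ∀ x y, ε * K x y ≤ P x y) (O : S) :
    (∀ z ∈ Set.Ioo (0:ℝ) 1,
      ∑' t : ℕ, z ^ t * kstep P t O O ≤ ε⁻¹ * ∑' t : ℕ, z ^ t * kstep K t O O) ∧
    green P O ≤ ENNReal.ofReal ε⁻¹ * green K O :=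
  stmt_12_general ν₀ hν₀ P K hPnn hProw hKnn hKrow hPinv hKrev ε hε hdom O

end
end

section
/- Let 𝒫 be a Markov transition kernel on a countable set S, O ∈ S, and l ≥ 1 an integer. Let 𝒫̄ := ((I+𝒫)/2)^{l+1}. Then the Green functions satisfy G_𝒫(O,O) ≤ 2^{l−1}·(l+1)·G_{𝒫̄}(O,O). In particular, for the lazy kernel (I+𝒫)/2 one has G_{(I+𝒫)/2}(O,O) = 2·G_𝒫(O,O). -/
open scoped Classical ENNReal

noncomputable section

/-- lazy version of a kernel. -/
def lazy {S : Type*} (Q : S → S → ℝ) : S → S → ℝ :=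
  fun x y => ((if x = y then (1:ℝ) else 0) + Q x y) / 2

/-! Expanding `((I + P) / 2) ^ s` binomially and using `∑ₛ C(s, k) 2⁻ˢ = 2` gives
`G_{(I+P)/2} = 2 G_P`. The lazy chain stays put with probability at least `1/2`, so its return
probabilities satisfy `cₛ ≤ 2 cₛ₊₁`. Hence each `cₛ` is at most `2ˡ` times the return probability
at the first multiple of `l + 1` not before `s`, and summing over the `l + 1` residues gives
`G_{(I+P)/2} ≤ (l + 1) 2ˡ G_{((I+P)/2)^(l+1)}`. -/

open Finset

theorem le_pow_mul_of_le_mul_succ {c : ℕ → ℝ≥0∞} {a : ℝ≥0∞} (hc : ∀ n, c n ≤ a * c (n + 1))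
    (n j : ℕ) : c n ≤ a ^ j * c (n + j) := by
  induction j with
  | zero => simp
  | succ j ih =>
    calc c n ≤ a ^ j * c (n + j) := ih
      _ ≤ a ^ j * (a * c (n + j + 1)) := by gcongr; exact hc _
      _ = a ^ (j + 1) * c (n + (j + 1)) := by rw [← mul_assoc, ← pow_succ, ← add_assoc]

theorem tsum_eq_sum_tsum_mul_add (c : ℕ → ℝ≥0∞) (m : ℕ) [NeZero m] :
    ∑' n, c n = ∑ r : Fin m, ∑' t, c (m * t + r) := by
  rw [← (Nat.divModEquiv m).symm.tsum_eq, ENNReal.tsum_prod', ENNReal.tsum_comm, tsum_fintype]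
  simp [Nat.divModEquiv_symm_apply, mul_comm]

theorem tsum_le_mul_tsum_mul_of_le_mul_succ {c : ℕ → ℝ≥0∞} {a : ℝ≥0∞} (ha : 1 ≤ a)
    (hc : ∀ n, c n ≤ a * c (n + 1)) (m : ℕ) :
    ∑' n, c n ≤ (m + 1) * a ^ m * ∑' t, c ((m + 1) * t) := by
  have residue : ∀ r : Fin (m + 1), ∑' t, c ((m + 1) * t + r) ≤ a ^ m * ∑' t, c ((m + 1) * t) := by
    refine Fin.cases ?_ (fun i => ?_)
    · simpa using le_mul_of_one_le_left zero_le (one_le_pow₀ ha)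
    · calc ∑' t, c ((m + 1) * t + (i + 1 : ℕ))
          ≤ ∑' t, a ^ m * c ((m + 1) * (t + 1)) := by
            refine ENNReal.tsum_le_tsum fun t => ?_
            calc c ((m + 1) * t + (i + 1 : ℕ))
                ≤ a ^ (m - i) * c ((m + 1) * t + (i + 1 : ℕ) + (m - i)) :=
                  le_pow_mul_of_le_mul_succ hc _ _
              _ = a ^ (m - i) * c ((m + 1) * (t + 1)) := by
                  congr 2; have := i.isLt; rw [mul_add]; omega
              _ ≤ a ^ m * c ((m + 1) * (t + 1)) := by
                  gcongr
                  exact m.sub_le i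
        _ ≤ a ^ m * ∑' t, c ((m + 1) * t) := by
            rw [ENNReal.tsum_mul_left]
            gcongr a ^ m * ?_
            conv_rhs => rw [tsum_eq_zero_add' ENNReal.summable]
            exact le_add_self
  calc ∑' n, c n = ∑ r : Fin (m + 1), ∑' t, c ((m + 1) * t + r) := tsum_eq_sum_tsum_mul_add c _
    _ ≤ ∑ _r : Fin (m + 1), a ^ m * ∑' t, c ((m + 1) * t) := sum_le_sum fun r _ => residue r
    _ = (m + 1) * a ^ m * ∑' t, c ((m + 1) * t) := by simp [mul_assoc]

theorem tsum_choose_mul_inv_two_pow (k : ℕ) : ∑' s, (s.choose k : ℝ≥0∞) * 2⁻¹ ^ s = 2 := by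
  have hr : ‖(2⁻¹ : ℝ)‖ < 1 := by norm_num
  have shifted : ∑' n, ((n + k).choose k : ℝ≥0∞) * 2⁻¹ ^ n = 2 ^ (k + 1) := by
    have hterm : ∀ n : ℕ, ((n + k).choose k : ℝ≥0∞) * 2⁻¹ ^ n
        = ENNReal.ofReal (((n + k).choose k : ℝ) * 2⁻¹ ^ n) := fun n => by
      rw [ENNReal.ofReal_mul (by positivity), ENNReal.ofReal_natCast, ENNReal.ofReal_pow
        (by norm_num), ENNReal.ofReal_inv_of_pos (by norm_num), ENNReal.ofReal_ofNat]
    simp_rw [hterm]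
    rw [← ENNReal.ofReal_tsum_of_nonneg (fun n => by positivity)
      (summable_choose_mul_geometric_of_norm_lt_one k hr),
      tsum_choose_mul_geometric_of_norm_lt_one k hr, show (1 : ℝ) - 2⁻¹ = 2⁻¹ by norm_num,
      one_div, ← inv_pow, inv_inv, ENNReal.ofReal_pow zero_le_two, ENNReal.ofReal_ofNat]
  calc ∑' s, (s.choose k : ℝ≥0∞) * 2⁻¹ ^ s
      = ∑' n, ((n + k).choose k : ℝ≥0∞) * 2⁻¹ ^ (n + k) := by
        rw [← ENNReal.summable.sum_add_tsum_nat_add' (k := k), sum_eq_zero, zero_add]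
        intro i hi
        simp [Nat.choose_eq_zero_of_lt (mem_range.mp hi)]
    _ = 2⁻¹ ^ k * 2 ^ (k + 1) := by
        rw [← shifted, ← ENNReal.tsum_mul_left]
        exact tsum_congr fun n => by ring
    _ = 2 := by
        rw [pow_succ, ← mul_assoc, ← mul_pow,
          ENNReal.inv_mul_cancel two_ne_zero ENNReal.ofNat_ne_top, one_pow, one_mul]

section ENNRealKernel

variable {S : Type*}

/-- The `ℝ≥0∞`-valued counterpart of `kstep`, in which series may be rearranged without any
summability bookkeeping. -/
def ekstep (q : S → S → ℝ≥0∞) : ℕ → S → S → ℝ≥0∞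
  | 0 => fun x y => if x = y then 1 else 0
  | (t + 1) => fun x y => ∑' z, ekstep q t x z * q z y

theorem ekstep_add (q : S → S → ℝ≥0∞) (a : ℕ) :
    ∀ b x y, ekstep q (a + b) x y = ∑' z, ekstep q a x z * ekstep q b z y
  | 0, x, y => by simp [ekstep]
  | b + 1, x, y => by
    calc ekstep q (a + b + 1) x y = ∑' w, (∑' z, ekstep q a x z * ekstep q b z w) * q w y := by
          simp only [ekstep, ekstep_add q a b]
      _ = ∑' z, ekstep q a x z * ∑' w, ekstep q b z w * q w y := by
          simp_rw [← ENNReal.tsum_mul_right, ← ENNReal.tsum_mul_left, mul_assoc]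
          exact ENNReal.tsum_comm
      _ = ∑' z, ekstep q a x z * ekstep q (b + 1) z y := rfl

theorem ekstep_ekstep (q : S → S → ℝ≥0∞) (m : ℕ) :
    ∀ t x y, ekstep (ekstep q m) t x y = ekstep q (m * t) x y
  | 0, x, y => by simp [ekstep]
  | t + 1, x, y => by
    simp only [ekstep, ekstep_ekstep q m t, mul_add_one, ekstep_add q (m * t) m]

theorem ekstep_mul_le_ekstep_succ (q : S → S → ℝ≥0∞) (t : ℕ) (x y : S) :
    ekstep q t x y * q y y ≤ ekstep q (t + 1) x y :=
  ENNReal.le_tsum (f := fun z => ekstep q t x z * q z y) y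

def elazy (q : S → S → ℝ≥0∞) (x y : S) : ℝ≥0∞ := 2⁻¹ * ((if x = y then 1 else 0) + q x y)

theorem tsum_ekstep_mul_elazy (q : S → S → ℝ≥0∞) (k : ℕ) (x y : S) :
    ∑' z, ekstep q k x z * elazy q z y = 2⁻¹ * (ekstep q k x y + ekstep q (k + 1) x y) := by
  simp only [elazy, mul_add, mul_left_comm _ (2⁻¹ : ℝ≥0∞), ENNReal.tsum_mul_left,
    ENNReal.tsum_add, mul_ite, mul_one, mul_zero, tsum_ite_eq]
  rw [mul_comm (ekstep q k x y)]
  rfl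

theorem ekstep_elazy (q : S → S → ℝ≥0∞) :
    ∀ s x y, ekstep (elazy q) s x y =
      2⁻¹ ^ s * ∑ k ∈ range (s + 1), (s.choose k : ℝ≥0∞) * ekstep q k x y
  | 0, x, y => by simp [ekstep]
  | s + 1, x, y => by
    calc ekstep (elazy q) (s + 1) x y
        = 2⁻¹ ^ s * ∑ k ∈ range (s + 1), (s.choose k : ℝ≥0∞) *
            ∑' z, ekstep q k x z * elazy q z y := by
          simp only [ekstep, ekstep_elazy q s, mul_assoc, ENNReal.tsum_mul_left, sum_mul]
          rw [Summable.tsum_finsetSum fun _ _ => ENNReal.summable]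
          simp only [ENNReal.tsum_mul_left]
      _ = 2⁻¹ ^ (s + 1) * ((∑ k ∈ range (s + 1), (s.choose k : ℝ≥0∞) * ekstep q k x y) +
            ∑ k ∈ range (s + 1), (s.choose k : ℝ≥0∞) * ekstep q (k + 1) x y) := by
          simp only [tsum_ekstep_mul_elazy, mul_add, sum_add_distrib, mul_left_comm _ (2⁻¹ : ℝ≥0∞),
            ← mul_sum, pow_succ]
          ring
      _ = _ := by rw [sum_choose_succ_mul (fun k _ => ekstep q k x y)]

theorem tsum_ekstep_elazy (q : S → S → ℝ≥0∞) (x y : S) :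
    ∑' s, ekstep (elazy q) s x y = 2 * ∑' k, ekstep q k x y := by
  calc ∑' s, ekstep (elazy q) s x y
      = ∑' s, ∑' k, 2⁻¹ ^ s * ((s.choose k : ℝ≥0∞) * ekstep q k x y) := by
        refine tsum_congr fun s => ?_
        rw [ekstep_elazy, ENNReal.tsum_mul_left, tsum_eq_sum (s := range (s + 1))]
        intro k hk
        simp [Nat.choose_eq_zero_of_lt (by simpa using hk : s < k)]
    _ = ∑' k, (∑' s, (s.choose k : ℝ≥0∞) * 2⁻¹ ^ s) * ekstep q k x y := by
        rw [ENNReal.tsum_comm]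
        simp_rw [← ENNReal.tsum_mul_right, mul_left_comm, mul_assoc]
    _ = 2 * ∑' k, ekstep q k x y := by
        simp_rw [tsum_choose_mul_inv_two_pow, ENNReal.tsum_mul_left]

theorem ekstep_elazy_le_two_mul_succ (q : S → S → ℝ≥0∞) (s : ℕ) (x : S) :
    ekstep (elazy q) s x x ≤ 2 * ekstep (elazy q) (s + 1) x x := by
  have half_le : 2⁻¹ ≤ elazy q x x := by
    calc (2⁻¹ : ℝ≥0∞) = 2⁻¹ * 1 := (mul_one _).symm
      _ ≤ elazy q x x := by simp only [elazy]; gcongr; exact le_self_add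
  calc ekstep (elazy q) s x x = 2 * (ekstep (elazy q) s x x * 2⁻¹) := by
        rw [mul_comm, mul_assoc, ENNReal.inv_mul_cancel two_ne_zero ENNReal.ofNat_ne_top, mul_one]
    _ ≤ 2 * (ekstep (elazy q) s x x * elazy q x x) := by gcongr
    _ ≤ 2 * ekstep (elazy q) (s + 1) x x := by gcongr; exact ekstep_mul_le_ekstep_succ _ _ _ _

theorem tsum_ekstep_eq_one {q : S → S → ℝ≥0∞} (hq : ∀ x, ∑' y, q x y = 1) :
    ∀ t x, ∑' y, ekstep q t x y = 1
  | 0, x => by simp [ekstep]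
  | t + 1, x => by
    simp only [ekstep]
    rw [ENNReal.tsum_comm]
    simp_rw [ENNReal.tsum_mul_left, hq, mul_one]
    exact tsum_ekstep_eq_one hq t x

end ENNRealKernel

section Stochastic

variable {S : Type*}

structure IsStochastic (Q : S → S → ℝ) : Prop where
  nonneg : ∀ x y, 0 ≤ Q x y
  hasSum_one : ∀ x, HasSum (Q x) 1

theorem hasSum_ite_eq_one (x : S) : HasSum (fun y => if x = y then (1 : ℝ) else 0) 1 := by
  simpa only [eq_comm] using hasSum_ite_eq x (1 : ℝ)

theorem hasSum_one_of_tsum_ofReal_eq_one {f : S → ℝ} (hf : ∀ x, 0 ≤ f x)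
    (h : ∑' x, ENNReal.ofReal (f x) = 1) : HasSum f 1 := by
  have hsum := ENNReal.hasSum_toReal (h ▸ ENNReal.one_ne_top)
  rw [← ENNReal.tsum_toReal_eq fun _ => ENNReal.ofReal_ne_top, h, ENNReal.toReal_one] at hsum
  simpa only [ENNReal.toReal_ofReal (hf _)] using hsum

theorem kstep_nonneg {Q : S → S → ℝ} (hQ : ∀ x y, 0 ≤ Q x y) : ∀ t x y, 0 ≤ kstep Q t x y
  | 0, x, y => by by_cases h : x = y <;> simp [kstep, h]
  | t + 1, x, y => tsum_nonneg fun z => mul_nonneg (kstep_nonneg hQ t x z) (hQ z y)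

theorem ofReal_lazy {Q : S → S → ℝ} (hQ : ∀ x y, 0 ≤ Q x y) :
    (fun x y => ENNReal.ofReal (lazy Q x y)) = elazy (fun x y => ENNReal.ofReal (Q x y)) := by
  ext x y
  have hδ : (0 : ℝ) ≤ if x = y then 1 else 0 := by positivity
  rw [lazy, elazy, div_eq_inv_mul, ENNReal.ofReal_mul (by norm_num), ENNReal.ofReal_add hδ (hQ x y),
    ENNReal.ofReal_inv_of_pos two_pos, ENNReal.ofReal_ofNat]
  split_ifs <;> simp

namespace IsStochastic

variable {Q : S → S → ℝ} (hQ : IsStochastic Q)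
include hQ

theorem le_one (x y : S) : Q x y ≤ 1 :=
  le_hasSum (hQ.hasSum_one x) y fun z _ => hQ.nonneg x z

theorem tsum_ofReal_eq_one (x : S) : ∑' y, ENNReal.ofReal (Q x y) = 1 := by
  rw [← ENNReal.ofReal_tsum_of_nonneg (hQ.nonneg x) (hQ.hasSum_one x).summable,
    (hQ.hasSum_one x).tsum_eq, ENNReal.ofReal_one]

theorem hasSum_kstep_and_ofReal_kstep : ∀ t x, HasSum (kstep Q t x) 1 ∧
    ∀ y, ENNReal.ofReal (kstep Q t x y) = ekstep (fun a b => ENNReal.ofReal (Q a b)) t x y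
  | 0, x => ⟨hasSum_ite_eq_one x, fun y => by by_cases h : x = y <;> simp [kstep, ekstep, h]⟩
  | t + 1, x => by
    obtain ⟨hsum, hofReal⟩ := hasSum_kstep_and_ofReal_kstep t x
    have hterm_nonneg : ∀ y z, 0 ≤ kstep Q t x z * Q z y := fun y z =>
      mul_nonneg (kstep_nonneg hQ.nonneg t x z) (hQ.nonneg z y)
    have ofReal_succ : ∀ y, ENNReal.ofReal (kstep Q (t + 1) x y) =
        ekstep (fun a b => ENNReal.ofReal (Q a b)) (t + 1) x y := by
      intro y
      have hsummable : Summable fun z => kstep Q t x z * Q z y :=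
        hsum.summable.of_nonneg_of_le (hterm_nonneg y) fun z =>
          mul_le_of_le_one_right (kstep_nonneg hQ.nonneg t x z) (hQ.le_one z y)
      rw [kstep, ENNReal.ofReal_tsum_of_nonneg (hterm_nonneg y) hsummable]
      simp only [ENNReal.ofReal_mul (kstep_nonneg hQ.nonneg t x _), hofReal]
      rfl
    refine ⟨hasSum_one_of_tsum_ofReal_eq_one (kstep_nonneg hQ.nonneg _ x) ?_, ofReal_succ⟩
    simp_rw [ofReal_succ]
    exact tsum_ekstep_eq_one hQ.tsum_ofReal_eq_one _ x

theorem ofReal_kstep (t : ℕ) :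
    (fun x y => ENNReal.ofReal (kstep Q t x y)) = ekstep (fun x y => ENNReal.ofReal (Q x y)) t :=
  funext₂ fun x y => (hQ.hasSum_kstep_and_ofReal_kstep t x).2 y

protected theorem kstep (t : ℕ) : IsStochastic (kstep Q t) :=
  ⟨kstep_nonneg hQ.nonneg t, fun x => (hQ.hasSum_kstep_and_ofReal_kstep t x).1⟩

protected theorem lazy : IsStochastic (lazy Q) where
  nonneg x y := by
    have hδ : (0 : ℝ) ≤ if x = y then 1 else 0 := by positivity
    exact div_nonneg (add_nonneg hδ (hQ.nonneg x y)) zero_le_two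
  hasSum_one x := by
    have h := ((hasSum_ite_eq_one x).add (hQ.hasSum_one x)).div_const 2
    rwa [one_add_one_eq_two, div_self two_ne_zero] at h

theorem green_eq (O : S) :
    green Q O = ∑' t, ekstep (fun x y => ENNReal.ofReal (Q x y)) t O O :=
  tsum_congr fun t => congrFun₂ (hQ.ofReal_kstep t) O O

end IsStochastic

end Stochastic

theorem stmt_13_general {S : Type*}
    (P : S → S → ℝ) (hnn : ∀ x y, 0 ≤ P x y) (hrow : ∀ x, HasSum (P x) 1)
    (O : S) (l : ℕ) :
    green P O ≤ ((2 ^ (l - 1) * (l + 1) : ℕ) : ℝ≥0∞) * green (kstep (lazy P) (l + 1)) O ∧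
    green (lazy P) O = 2 * green P O := by
  have hP : IsStochastic P := ⟨hnn, hrow⟩
  set c : ℕ → ℝ≥0∞ := fun s => ekstep (elazy fun x y => ENNReal.ofReal (P x y)) s O O
  have green_lazy : green (lazy P) O = ∑' s, c s := by
    rw [hP.lazy.green_eq, ofReal_lazy hnn]
  have green_lazy_pow : green (kstep (lazy P) (l + 1)) O = ∑' t, c ((l + 1) * t) := by
    rw [(hP.lazy.kstep (l + 1)).green_eq, hP.lazy.ofReal_kstep, ofReal_lazy hnn]
    simp_rw [ekstep_ekstep, c]
  have doubling : green (lazy P) O = 2 * green P O := by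
    rw [green_lazy, tsum_ekstep_elazy, hP.green_eq]
  have factor : (l + 1) * 2 ^ l ≤ 2 * (2 ^ (l - 1) * (l + 1)) :=
    calc (l + 1) * 2 ^ l ≤ (l + 1) * 2 ^ (l - 1 + 1) := by gcongr <;> omega
      _ = 2 * (2 ^ (l - 1) * (l + 1)) := by ring
  refine ⟨?_, doubling⟩
  refine (ENNReal.mul_le_mul_iff_right two_ne_zero ENNReal.ofNat_ne_top).mp ?_
  calc 2 * green P O = ∑' s, c s := by rw [← doubling, green_lazy]
    _ ≤ (l + 1) * 2 ^ l * ∑' t, c ((l + 1) * t) :=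
        tsum_le_mul_tsum_mul_of_le_mul_succ one_le_two
          (fun s => ekstep_elazy_le_two_mul_succ _ s O) l
    _ ≤ 2 * (((2 ^ (l - 1) * (l + 1) : ℕ) : ℝ≥0∞) * green (kstep (lazy P) (l + 1)) O) := by
        rw [green_lazy_pow, ← mul_assoc]
        gcongr ?_ * _
        exact_mod_cast factor

/-- the Green function of `𝒫` is controlled by that of
`𝒫̄ = ((I+𝒫)/2)^{l+1}`, and lazification doubles the Green function. -/
theorem stmt_13 {S : Type*} [Countable S]
    (P : S → S → ℝ) (hnn : ∀ x y, 0 ≤ P x y) (hrow : ∀ x, HasSum (P x) 1)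
    (O : S) (l : ℕ) (hl : 1 ≤ l) :
    green P O ≤ ((2 ^ (l - 1) * (l + 1) : ℕ) : ℝ≥0∞) * green (kstep (lazy P) (l + 1)) O ∧
    green (lazy P) O = 2 * green P O :=
  stmt_13_general P hnn hrow O l

end
end
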